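/- arXiv:2211.01510 — 3 statements merged into one kernel-verified Lean document; each statement's English description precedes it below -/
import Mathlib

section
/- Let Γ be a surjunctive group. Then Γ satisfies Kaplansky's stable finiteness conjecture: for every field F and every d ≥ 1, the matrix ring M_d(F[Γ]) is directly finite. -/
/-!
Over a finite commutative ring `k`, a matrix `x ∈ M_n(k[Γ])` acts faithfully on the
configurations `u : Γ → kⁿ` by `(x • u) g i = ∑ j, ∑ h, x i j h * u (g * h) j`. Each coordinate
of `x • u` depends on finitely many coordinates of `u`, and the action commutes with the left
shift, so `x` acts by a cellular automaton with the finite alphabet `kⁿ`. If `x * y = 1`, then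
`y` acts injectively, hence surjectively by surjunctivity, so `x` acts as the two-sided inverse
of `y` and `y * x = 1` by faithfulness.

For a field `F` (or any reduced commutative ring), the coefficients of `x` and `y` generate a
finitely generated reduced `ℤ`-algebra `A`. Such an `A` is a Jacobson ring all of whose residue
fields `A ⧸ m` at maximal ideals are finite, so `A[Γ]` embeds into the product of the
`(A ⧸ m)[Γ]`, each of which is stably finite by the first part.
-/

/-- A group is Hopfian if every surjective endomorphism is injective. -/
def IsHopfian (G : Type*) [Group G] : Prop :=
  ∀ φ : G →* G, Function.Surjective φ → Function.Injective φ

/-- A unital ring is directly finite if `x * y = 1` implies `y * x = 1`. -/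
def DirectlyFinite (R : Type*) [Ring R] : Prop :=
  ∀ x y : R, x * y = 1 → y * x = 1

/-- The action of `Γ` on the base group `Γ →₀ A` of the wreath product,
given by `(g • f) x = f (g⁻¹ * x)`. -/
noncomputable def wreathAction (A : Type*) [AddCommGroup A] (Γ : Type*) [Group Γ] :
    Γ →* MulAut (Multiplicative (Γ →₀ A)) where
  toFun g := AddEquiv.toMultiplicative (Finsupp.domCongr (Equiv.mulLeft g))
  map_one' := by
    apply MulEquiv.ext
    intro f
    apply Multiplicative.toAdd.injective
    apply Finsupp.ext
    intro x
    simp [Finsupp.domCongr_apply]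
    rfl
  map_mul' g₁ g₂ := by
    apply MulEquiv.ext
    intro f
    apply Multiplicative.toAdd.injective
    apply Finsupp.ext
    intro x
    simp [Finsupp.domCongr_apply, mul_assoc]
    rfl

/-- The (restricted) wreath product `A ≀ Γ`: the semidirect product of the group
`Γ →₀ A` of finitely supported functions `Γ → A` (pointwise addition) by `Γ`,
acting by `(g • f) x = f (g⁻¹ * x)`. -/
abbrev WreathProduct (A : Type*) [AddCommGroup A] (Γ : Type*) [Group Γ] : Type _ :=
  SemidirectProduct (Multiplicative (Γ →₀ A)) Γ (wreathAction A Γ)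

/-- The base group `Γ →₀ A` of the wreath product, as a subgroup of `A ≀ Γ`. -/
noncomputable def WreathProduct.base (A : Type*) [AddCommGroup A] (Γ : Type*) [Group Γ] :
    Subgroup (WreathProduct A Γ) :=
  (SemidirectProduct.inl : Multiplicative (Γ →₀ A) →* WreathProduct A Γ).range

/-- The prodiscrete topology on `Γ → A`: the product topology where each factor
carries the discrete topology. -/
def prodiscreteTopology (Γ A : Type*) : TopologicalSpace (Γ → A) :=
  @Pi.topologicalSpace Γ (fun _ => A) (fun _ => ⊥)

/-- A group is surjunctive if every injective cellular automaton (continuous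
`Γ`-equivariant self-map of `F^Γ` for a finite alphabet `F`) is surjective. -/
def IsSurjunctive (Γ : Type*) [Group Γ] : Prop :=
  ∀ (F : Type) [Finite F] (τ : (Γ → F) → (Γ → F)),
    @Continuous _ _ (prodiscreteTopology Γ F) (prodiscreteTopology Γ F) τ →
    (∀ (g : Γ) (u : Γ → F), τ (fun x => u (g⁻¹ * x)) = fun x => τ u (g⁻¹ * x)) →
    Function.Injective τ → Function.Surjective τ

open Function

theorem IsDedekindFiniteMonoid.of_injective_end {M R V : Type*} [Monoid M] [Semiring R]
    [AddCommMonoid V] [Module R V] (φ : M →* Module.End R V) (hφ : Injective φ)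
    (hsurj : ∀ m, Injective (φ m) → Surjective (φ m)) : IsDedekindFiniteMonoid M where
  mul_eq_one_symm {x y} hxy := by
    have hleft : LeftInverse (φ x) (φ y) := fun v => by
      rw [← Module.End.mul_apply, ← map_mul, hxy, map_one, Module.End.one_apply]
    have hright := hleft.rightInverse_of_surjective (hsurj y hleft.injective)
    exact hφ (LinearMap.ext fun v => by rw [map_mul, Module.End.mul_apply, hright v, map_one]; rfl)

theorem prodiscreteTopology_eq_pi (Γ V : Type*) [TopologicalSpace V] [DiscreteTopology V] :
    prodiscreteTopology Γ V = Pi.topologicalSpace := by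
  rw [prodiscreteTopology, DiscreteTopology.eq_bot (α := V)]

theorem IsSurjunctive.surjective {Γ : Type*} [Group Γ] (hΓ : IsSurjunctive Γ) {V : Type*}
    [Finite V] [TopologicalSpace V] [DiscreteTopology V] {τ : (Γ → V) → (Γ → V)}
    (hc : Continuous τ)
    (he : ∀ (g : Γ) (u : Γ → V), τ (fun x => u (g⁻¹ * x)) = fun x => τ u (g⁻¹ * x))
    (hi : Injective τ) : Surjective τ := by
  obtain ⟨N, ⟨e⟩⟩ := Finite.exists_equiv_fin V
  let _ : TopologicalSpace (Fin N) := ⊥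
  have : DiscreteTopology (Fin N) := ⟨rfl⟩
  let E : (Γ → V) ≃ₜ (Γ → Fin N) := .piCongrRight fun _ => e.toHomeomorphOfDiscrete
  have hsurj := hΓ (Fin N) (E ∘ τ ∘ E.symm)
    (by rw [prodiscreteTopology_eq_pi]; fun_prop)
    (fun g u => congrArg E (he g (E.symm u)))
    (E.injective.comp (hi.comp E.symm.injective))
  simpa [comp_assoc] using E.symm.surjective.comp (hsurj.comp E.surjective)

theorem continuous_of_finite_dependence {Γ V W : Type*} [TopologicalSpace V] [DiscreteTopology V]
    [TopologicalSpace W] [DiscreteTopology W] {τ : (Γ → V) → (Γ → W)}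
    (h : ∀ g, ∃ T : Finset Γ, ∀ u v : Γ → V, (∀ x ∈ T, u x = v x) → τ u g = τ v g) :
    Continuous τ := by
  refine continuous_pi fun g => IsLocallyConstant.continuous ?_
  obtain ⟨T, hT⟩ := h g
  refine (IsLocallyConstant.iff_exists_open _).2 fun u => ⟨⋂ x ∈ T, {v | v x = u x}, ?_, ?_, ?_⟩
  · exact isOpen_biInter_finset fun x _ =>
      (isOpen_discrete {u x}).preimage (continuous_apply x : Continuous fun v : Γ → V => v x)
  · simp
  · intro v hv
    exact hT v u (by simpa using hv)

namespace MonoidAlgebra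

variable (k Γ : Type*) [CommRing k] [Group Γ]

def rightShift : Γ →* Module.End k (Γ → k) where
  toFun h := LinearMap.funLeft k k (· * h)
  map_one' := by ext; simp
  map_mul' _ _ := by ext; simp [mul_assoc]

noncomputable def rightRegular : MonoidAlgebra k Γ →ₐ[k] Module.End k (Γ → k) :=
  lift k _ Γ (rightShift k Γ)

variable {k Γ}

theorem rightRegular_apply (a : MonoidAlgebra k Γ) (u : Γ → k) (g : Γ) :
    rightRegular k Γ a u g = ∑ h ∈ a.coeff.support, a.coeff h * u (g * h) := by
  simp [rightRegular, lift_apply, Finsupp.sum, rightShift]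

theorem rightRegular_single_one [DecidableEq Γ] (a : MonoidAlgebra k Γ) (g : Γ) :
    rightRegular k Γ a (Pi.single 1 1) g = a.coeff g⁻¹ := by
  rw [rightRegular_apply, Finset.sum_eq_single g⁻¹]
  · simp
  · intro h _ hne
    simp [mul_eq_one_iff_eq_inv', hne]
  · simp +contextual

theorem rightRegular_injective : Injective (rightRegular k Γ) := by
  classical
  intro a b hab
  ext g
  simpa [rightRegular_single_one] using congr($hab (Pi.single 1 1) g⁻¹)

variable (k Γ) (n : Type*) [Fintype n] [DecidableEq n]

noncomputable def matrixAction : Matrix n n (MonoidAlgebra k Γ) →+* Module.End k (Γ → n → k) :=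
  let swap : (n → Γ → k) ≃ₗ[k] (Γ → n → k) :=
    { Equiv.piComm _ with map_add' := fun _ _ => rfl, map_smul' := fun _ _ => rfl }
  (swap.conjRingEquiv.toRingHom.comp (endVecRingEquivMatrixEnd n k (Γ → k)).symm.toRingHom).comp
    (rightRegular k Γ).toRingHom.mapMatrix

variable {k Γ n}

theorem matrixAction_apply (x : Matrix n n (MonoidAlgebra k Γ)) (u : Γ → n → k) (g : Γ) (i : n) :
    matrixAction k Γ n x u g i =
      ∑ j, ∑ h ∈ (x i j).coeff.support, (x i j).coeff h * u (g * h) j := by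
  change (∑ j, rightRegular k Γ (x i j) (fun g' => u g' j)) g = _
  simp only [Finset.sum_apply, rightRegular_apply]

theorem matrixAction_injective : Injective (matrixAction k Γ n) := by
  simp only [matrixAction, RingHom.coe_comp]
  exact (RingEquiv.injective _).comp ((RingEquiv.injective _).comp
    (Matrix.map_injective rightRegular_injective))

theorem matrixAction_shift (x : Matrix n n (MonoidAlgebra k Γ)) (g : Γ) (u : Γ → n → k) :
    matrixAction k Γ n x (fun y => u (g⁻¹ * y)) = fun y => matrixAction k Γ n x u (g⁻¹ * y) := by
  ext y i
  simp only [matrixAction_apply, mul_assoc]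

theorem continuous_matrixAction [TopologicalSpace (n → k)] [DiscreteTopology (n → k)]
    (x : Matrix n n (MonoidAlgebra k Γ)) : Continuous (matrixAction k Γ n x) := by
  classical
  refine continuous_of_finite_dependence fun g =>
    ⟨(Finset.univ.biUnion fun p : n × n => (x p.1 p.2).coeff.support).image (g * ·),
      fun u v huv => funext fun i => ?_⟩
  simp only [matrixAction_apply]
  refine Finset.sum_congr rfl fun j _ => Finset.sum_congr rfl fun h hh => ?_
  rw [huv]
  exact Finset.mem_image_of_mem _ (Finset.mem_biUnion.2 ⟨(i, j), Finset.mem_univ _, hh⟩)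

end MonoidAlgebra

instance Int.isJacobsonRing : IsJacobsonRing ℤ := by
  refine isJacobsonRing_iff_prime_eq.2 fun P hP => ?_
  by_cases hbot : P = ⊥
  · subst hbot
    refine le_antisymm (fun x hx => ?_) Ideal.le_jacobson
    have hsq : x * x + 1 = 1 ∨ x * x + 1 = -1 := Int.isUnit_iff.1 (Ideal.mem_jacobson_bot.1 hx x)
    have : x = 0 := by rcases hsq with h | h <;> nlinarith
    simp [this]
  · have := hP.isMaximal hbot
    exact Ideal.jacobson_eq_self_of_isMaximal

theorem Ideal.finite_quotient_of_finiteType_int {A : Type*} [CommRing A] [Algebra.FiniteType ℤ A]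
    (m : Ideal A) [m.IsMaximal] : Finite (A ⧸ m) := by
  let _ := Ideal.Quotient.field m
  have : Module.Finite ℤ (A ⧸ m) := finite_of_finite_type_of_isJacobsonRing ℤ (A ⧸ m)
  rcases CharP.char_is_prime_or_zero (A ⧸ m) (ringChar (A ⧸ m)) with hp | h0
  · have : Fact (ringChar (A ⧸ m)).Prime := ⟨hp⟩
    let _ : Algebra (ZMod (ringChar (A ⧸ m))) (A ⧸ m) := ZMod.algebra _ _
    have : Module.Finite (ZMod (ringChar (A ⧸ m))) (A ⧸ m) :=
      .of_restrictScalars_finite ℤ _ _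
    exact Module.finite_of_finite (ZMod (ringChar (A ⧸ m)))
  · -- in characteristic zero the integral extension `ℤ → A ⧸ m` would make `ℤ` a field
    have : CharP (A ⧸ m) 0 := h0 ▸ ringChar.charP _
    have := CharP.charP_to_charZero (A ⧸ m)
    exact absurd ((Algebra.IsIntegral.isField_iff_isField (algebraMap ℤ (A ⧸ m)).injective_int).2
      (Field.toIsField _)) Int.not_isField

theorem IsJacobsonRing.eq_zero_of_forall_mem_maximal {A : Type*} [CommRing A] [IsJacobsonRing A]
    [IsReduced A] {a : A} (ha : ∀ m : Ideal A, m.IsMaximal → a ∈ m) : a = 0 := by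
  have : a ∈ (⊥ : Ideal A).jacobson := Ideal.mem_sInf.2 fun m hm => ha m hm.2
  rwa [← Ideal.radical_eq_jacobson, (Ideal.isRadical_bot_iff.2 ‹_›).radical, Ideal.mem_bot] at this

instance Pi.isStablyFiniteRing {ι : Type*} {R : ι → Type*} [∀ i, Semiring (R i)]
    [∀ i, IsStablyFiniteRing (R i)] : IsStablyFiniteRing (∀ i, R i) where
  isDedekindFiniteMonoid n := ⟨fun {x y} hxy => by
    ext a b i
    have hi := congr((Pi.evalRingHom R i).mapMatrix $hxy)
    rw [map_mul, map_one] at hi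
    have hyx := mul_eq_one_symm hi
    rw [← map_mul, ← map_one (Pi.evalRingHom R i).mapMatrix] at hyx
    simpa using congr($hyx a b)⟩

theorem MonoidAlgebra.exists_fg_forall_mem_range_mapMatrix {F Γ n : Type*} [CommRing F] [Monoid Γ]
    [Fintype n] [DecidableEq n] (s : Finset (Matrix n n (MonoidAlgebra F Γ))) :
    ∃ A : Subalgebra ℤ F, A.FG ∧
      ∀ z ∈ s, z ∈ Set.range (mapRingHom Γ A.val.toRingHom).mapMatrix := by
  classical
  let C := s.biUnion fun z => Finset.univ.biUnion fun p : n × n => (z p.1 p.2).coeff.frange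
  let A := Algebra.adjoin ℤ (C : Set F)
  refine ⟨A, Subalgebra.fg_adjoin_finset C, fun z hz => ?_⟩
  have hentry (i j : n) : z i j ∈ Set.range (mapRingHom Γ A.val.toRingHom) := by
    rw [coe_mapRingHom, range_map]
    intro g
    by_cases h0 : (z i j).coeff g = 0
    · exact ⟨0, by simp [h0]⟩
    · refine ⟨⟨_, Algebra.subset_adjoin ?_⟩, rfl⟩
      simp only [C, Finset.coe_biUnion, Set.mem_iUnion, Finset.mem_coe, Finsupp.mem_frange]
      exact ⟨z, hz, (i, j), Finset.mem_univ _, h0, g, rfl⟩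
  choose z' hz' using hentry
  exact ⟨z', Matrix.ext hz'⟩

namespace IsSurjunctive

open MonoidAlgebra

variable {Γ : Type*} [Group Γ]

theorem isStablyFiniteRing_monoidAlgebra_of_finite (hΓ : IsSurjunctive Γ) (k : Type*) [CommRing k]
    [Finite k] : IsStablyFiniteRing (MonoidAlgebra k Γ) where
  isDedekindFiniteMonoid n := by
    let _ : TopologicalSpace (Fin n → k) := ⊥
    have : DiscreteTopology (Fin n → k) := ⟨rfl⟩
    exact .of_injective_end (matrixAction k Γ (Fin n)).toMonoidHom matrixAction_injective
      fun x hx => hΓ.surjective (τ := matrixAction k Γ (Fin n) x) (continuous_matrixAction x)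
        (matrixAction_shift x) hx

theorem isStablyFiniteRing_monoidAlgebra_of_finiteType (hΓ : IsSurjunctive Γ) (A : Type*)
    [CommRing A] [IsReduced A] [Algebra.FiniteType ℤ A] :
    IsStablyFiniteRing (MonoidAlgebra A Γ) := by
  have (m : MaximalSpectrum A) : IsStablyFiniteRing (MonoidAlgebra (A ⧸ m.asIdeal) Γ) :=
    have := m.asIdeal.finite_quotient_of_finiteType_int
    hΓ.isStablyFiniteRing_monoidAlgebra_of_finite _
  refine .of_injective (RingHom.pi fun m : MaximalSpectrum A =>
    mapRingHom Γ (Ideal.Quotient.mk m.asIdeal)) ((injective_iff_map_eq_zero _).2 fun a ha => ?_)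
  have : IsJacobsonRing A := isJacobsonRing_of_finiteType (A := ℤ)
  ext g
  refine IsJacobsonRing.eq_zero_of_forall_mem_maximal fun m hm => ?_
  simpa [Ideal.Quotient.eq_zero_iff_mem] using congr(($ha ⟨m, hm⟩).coeff g)

theorem isStablyFiniteRing_monoidAlgebra (hΓ : IsSurjunctive Γ) (F : Type*) [CommRing F]
    [IsReduced F] : IsStablyFiniteRing (MonoidAlgebra F Γ) where
  isDedekindFiniteMonoid n := ⟨fun {x y} hxy => by
    classical
    obtain ⟨A, hfg, hA⟩ := exists_fg_forall_mem_range_mapMatrix {x, y}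
    have : Algebra.FiniteType ℤ A := (Subalgebra.fg_iff_finiteType A).1 hfg
    have : IsReduced A := isReduced_of_injective A.val Subtype.val_injective
    have := hΓ.isStablyFiniteRing_monoidAlgebra_of_finiteType A
    obtain ⟨x', rfl⟩ := hA x (by simp)
    obtain ⟨y', rfl⟩ := hA y (by simp)
    have hι : Injective (RingHom.mapMatrix (m := Fin n) (mapRingHom Γ A.val.toRingHom)) :=
      Matrix.map_injective (by rw [coe_mapRingHom]; exact map_injective _ Subtype.val_injective)
    rw [← map_mul, ← map_one (mapRingHom Γ A.val.toRingHom).mapMatrix] at hxy ⊢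
    rw [mul_eq_one_symm (hι hxy)]⟩

end IsSurjunctive

theorem surjunctive_implies_stably_finite_general (Γ : Type*) [Group Γ]
    (hΓ : IsSurjunctive Γ) (F : Type*) [Field F] (d : ℕ) :
    DirectlyFinite (Matrix (Fin d) (Fin d) (MonoidAlgebra F Γ)) := by
  have := hΓ.isStablyFiniteRing_monoidAlgebra F
  exact fun _ _ => mul_eq_one_symm

/-- Surjunctive groups satisfy Kaplansky's stable finiteness conjecture. -/
theorem surjunctive_implies_stably_finite (Γ : Type*) [Group Γ]
    (hΓ : IsSurjunctive Γ) (F : Type*) [Field F] (d : ℕ) (hd : 1 ≤ d) :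
    DirectlyFinite (Matrix (Fin d) (Fin d) (MonoidAlgebra F Γ)) :=
  surjunctive_implies_stably_finite_general Γ hΓ F d
end

section
/- Let A be an abelian group and Γ a group. The group homomorphism A ≀ Γ → A × Ab(Γ) given by (f, γ) ↦ (ε(f), [γ]), where ε(f) = Σ_{x ∈ Γ} f(x) is the augmentation and [γ] is the image of γ in the abelianization Ab(Γ) of Γ, is surjective and its kernel equals the commutator subgroup of A ≀ Γ. In other words, the abelianization of A ≀ Γ is A × Ab(Γ) via this map. -/
/-! The map `(f, γ) ↦ (ε f, [γ])` is a homomorphism because `ε` is invariant under the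
shift action and the target is abelian. Conversely, the commutator of `γ` with `δ₁ a` is
`δ_γ a - δ₁ a`, so modulo commutators every `f` is congruent to `δ₁ (ε f)`: hence a kernel
element `(f, γ)` has `f` in the commutator subgroup, and `γ ∈ [Γ, Γ]` maps into it. -/

open SemidirectProduct Finsupp
open scoped commutatorElement

namespace SemidirectProduct

variable {N G : Type*} [Group N] [Group G] {φ : G →* MulAut N}

theorem commutatorElement_inr_inl (g : G) (n : N) :
    ⁅(inr g : N ⋊[φ] G), (inl n : N ⋊[φ] G)⁆ = inl (φ g n * n⁻¹) := by
  rw [commutatorElement_def, map_mul, inl_aut, map_inv, map_inv]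

end SemidirectProduct

theorem MonoidHom.map_commutator_le {G H : Type*} [Group G] [Group H] (f : G →* H) :
    (commutator G).map f ≤ commutator H := by
  rw [_root_.map_commutator_eq (f := f)]
  exact Subgroup.commutator_mono le_top le_top

namespace WreathProduct

variable {A : Type*} [AddCommGroup A] {Γ : Type*}

noncomputable def augmentation : (Γ →₀ A) →+ A :=
  liftAddHom fun _ => AddMonoidHom.id A

theorem augmentation_apply (f : Γ →₀ A) : augmentation f = f.sum fun _ a => a := rfl

variable [Group Γ]

theorem toAdd_wreathAction (g : Γ) (f : Multiplicative (Γ →₀ A)) :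
    (wreathAction A Γ g f).toAdd = f.toAdd.equivMapDomain (Equiv.mulLeft g) := rfl

theorem augmentation_wreathAction (g : Γ) (f : Multiplicative (Γ →₀ A)) :
    augmentation (wreathAction A Γ g f).toAdd = augmentation f.toAdd := by
  rw [toAdd_wreathAction, equivMapDomain_eq_mapDomain]
  exact sum_mapDomain_index (fun _ => rfl) (fun _ _ _ => rfl)

theorem wreathAction_ofAdd_single (g x : Γ) (a : A) :
    wreathAction A Γ g (.ofAdd (single x a)) = .ofAdd (single (g * x) a) := by
  rw [← ofAdd_toAdd (wreathAction A Γ g _), toAdd_wreathAction, toAdd_ofAdd, equivMapDomain_single,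
    Equiv.coe_mulLeft]

theorem inl_single_sub_single_one_mem_commutator (x : Γ) (a : A) :
    (inl (.ofAdd (single x a - single 1 a)) : WreathProduct A Γ) ∈
      commutator (WreathProduct A Γ) := by
  have h : (inl (.ofAdd (single x a - single 1 a)) : WreathProduct A Γ) =
      ⁅(inr x : WreathProduct A Γ), inl (.ofAdd (single 1 a))⁆ := by
    rw [commutatorElement_inr_inl, wreathAction_ofAdd_single, mul_one, sub_eq_add_neg, ofAdd_add,
      ofAdd_neg]
  rw [h]
  exact Subgroup.commutator_mem_commutator (Subgroup.mem_top _) (Subgroup.mem_top _)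

theorem inl_sub_single_one_augmentation_mem_commutator (f : Γ →₀ A) :
    (inl (.ofAdd (f - single 1 (augmentation f))) : WreathProduct A Γ) ∈
      commutator (WreathProduct A Γ) := by
  induction f using Finsupp.induction_linear with
  | zero => simp
  | add f g hf hg =>
    have h : f + g - single 1 (augmentation (f + g)) =
        (f - single 1 (augmentation f)) + (g - single 1 (augmentation g)) := by
      rw [map_add, single_add]; abel
    rw [h, ofAdd_add, map_mul]
    exact mul_mem hf hg
  | single x a =>
    simpa [augmentation_apply] using inl_single_sub_single_one_mem_commutator x a

variable (A Γ) in
noncomputable def abelianizationHom : WreathProduct A Γ →* Multiplicative A × Abelianization Γ :=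
  lift ((MonoidHom.inl _ _).comp (augmentation (Γ := Γ)).toMultiplicative)
    ((MonoidHom.inr _ _).comp Abelianization.of) fun g => MonoidHom.ext fun f => by
      simp [augmentation_wreathAction]

theorem abelianizationHom_apply (w : WreathProduct A Γ) :
    abelianizationHom A Γ w = (.ofAdd (augmentation w.left.toAdd), Abelianization.of w.right) := by
  rw [← inl_left_mul_inr_right w, map_mul, abelianizationHom, lift_inl, lift_inr]
  simp

theorem abelianizationHom_surjective : Function.Surjective (abelianizationHom A Γ) := by
  rintro ⟨a, q⟩
  obtain ⟨g, rfl⟩ : ∃ g, Abelianization.of g = q := QuotientGroup.mk_surjective q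
  exact ⟨⟨.ofAdd (single 1 a.toAdd), g⟩, by simp [abelianizationHom_apply, augmentation_apply]⟩

theorem ker_abelianizationHom : (abelianizationHom A Γ).ker = commutator (WreathProduct A Γ) := by
  refine le_antisymm (fun w hw => ?_) (Abelianization.commutator_subset_ker _)
  rw [MonoidHom.mem_ker, abelianizationHom_apply, Prod.mk_eq_one, ofAdd_eq_one] at hw
  obtain ⟨hleft, hright⟩ := hw
  rw [← MonoidHom.mem_ker, Abelianization.ker_of] at hright
  rw [← inl_left_mul_inr_right w]
  refine mul_mem ?_ (MonoidHom.map_commutator_le inr ⟨_, hright, rfl⟩)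
  simpa [hleft] using inl_sub_single_one_augmentation_mem_commutator w.left.toAdd

end WreathProduct

/-- The abelianization of `A ≀ Γ` is `A × Ab(Γ)`, via the surjective homomorphism
`(f, γ) ↦ (ε f, [γ])`, where `ε` is the augmentation (the sum of values) and `[γ]` is
the class of `γ` in the abelianization of `Γ`; its kernel is the commutator subgroup
of `A ≀ Γ`. -/
theorem wreath_abelianization (A : Type*) [AddCommGroup A] (Γ : Type*) [Group Γ] :
    ∃ Φ : WreathProduct A Γ →* (Multiplicative A × Abelianization Γ),
      (∀ w : WreathProduct A Γ,
        Φ w = (Multiplicative.ofAdd ((Multiplicative.toAdd w.left).sum fun _ a => a),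
               Abelianization.of w.right)) ∧
      Function.Surjective Φ ∧
      Φ.ker = commutator (WreathProduct A Γ) :=
  ⟨WreathProduct.abelianizationHom A Γ, WreathProduct.abelianizationHom_apply,
    WreathProduct.abelianizationHom_surjective, WreathProduct.ker_abelianizationHom⟩
end

section
/- Let A and B be abelian groups. Suppose that every element of A has finite order, and that for every a ∈ A and every finite-order b ∈ B the orders of a and b are coprime. Let Γ be an infinite finitely generated group. If A ≀ Γ and B ≀ Γ are Hopfian, then (A × B) ≀ Γ is Hopfian. -/
/-!
A surjective endomorphism `φ` of `(A × B) ≀ Γ` maps the base group into itself: the base is abelian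
and normal, so the image `m` of a base element commutes with all conjugates of `m` by base
elements, and if `m` lies outside the base this fails for the conjugate by `δ₁(c)` as soon as
`2c ≠ 0` (such a `c` exists by coprimality once `A` and `B` are nontrivial; otherwise the statement
is immediate). The subgroup `K ≅ Γ →₀ A` of base elements with trivial `B`-coordinates consists of
elements whose orders are coprime to the orders of all torsion elements of `B`, so `φ(K) ⊆ K`.
Hence `φ` descends to a surjective, thus injective, endomorphism of `B ≀ Γ = ((A × B) ≀ Γ) / K`,
which gives `φ⁻¹(K) = K`; in particular `ker φ ≤ K` and `φ(K) = K`. Finally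
`t ↦ π_A (φ (ι_A t))` is a surjective endomorphism of `A ≀ Γ` that agrees with `φ` on `K`; it is
injective because `A ≀ Γ` is Hopfian, so `ker φ` is trivial.
-/

open Function

theorem IsHopfian.of_mulEquiv {G H : Type*} [Group G] [Group H] (hG : IsHopfian G)
    (e : G ≃* H) : IsHopfian H := by
  intro ψ hψ
  have hconj := hG ((e.symm.toMonoidHom.comp ψ).comp e.toMonoidHom)
    (e.symm.surjective.comp (hψ.comp e.surjective))
  have hψ_eq : ⇑ψ = e ∘ ((e.symm.toMonoidHom.comp ψ).comp e.toMonoidHom) ∘ e.symm := by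
    funext x
    simp
  rw [hψ_eq]
  exact e.injective.comp (hconj.comp e.symm.injective)

theorem IsHopfian.comap_ker_eq {G H : Type*} [Group G] [Group H] (hH : IsHopfian H)
    {p : G →* H} {s : H →* G} (hs : ∀ h, p (s h) = h) {φ : G →* G} (hφ : Surjective φ)
    (hker : p.ker ≤ p.ker.comap φ) : p.ker.comap φ = p.ker := by
  set ψ := p.comp (φ.comp s)
  have hψ : ∀ x, ψ (p x) = p (φ x) := by
    intro x
    have hk : p (φ ((s (p x))⁻¹ * x)) = 1 := hker (by simp [hs])
    rw [map_mul, map_mul, map_inv, map_inv, inv_mul_eq_one] at hk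
    exact hk
  have hψ_surj : Surjective ψ := fun h ↦ by
    obtain ⟨x, hx⟩ := hφ (s h)
    exact ⟨p x, by rw [hψ, hx, hs]⟩
  ext x
  rw [Subgroup.mem_comap, MonoidHom.mem_ker, MonoidHom.mem_ker, ← hψ]
  exact (hH ψ hψ_surj).eq_iff' (map_one ψ)

section Coprime

variable {A B : Type*} [AddCommGroup A] [AddCommGroup B]

theorem Prod.exists_add_self_ne_zero [Nontrivial A] [Nontrivial B]
    (hcop : ∀ (a : A) (b : B), IsOfFinAddOrder b → Nat.Coprime (addOrderOf a) (addOrderOf b)) :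
    ∃ c : A × B, c + c ≠ 0 := by
  by_contra! h
  obtain ⟨a, ha⟩ := exists_ne (0 : A)
  obtain ⟨b, hb⟩ := exists_ne (0 : B)
  have h2a : 2 • a = 0 := by simpa [two_nsmul] using congrArg Prod.fst (h (a, 0))
  have h2b : 2 • b = 0 := by simpa [two_nsmul] using congrArg Prod.snd (h (0, b))
  have hcop_ab := hcop a b (isOfFinAddOrder_iff_nsmul_eq_zero.mpr ⟨2, two_pos, h2b⟩)
  rw [addOrderOf_eq_prime h2a ha, addOrderOf_eq_prime h2b hb] at hcop_ab
  norm_num at hcop_ab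

theorem Finsupp.exists_nsmul_eq_zero_of_coprime {Γ : Type*} (htor : ∀ a : A, IsOfFinAddOrder a)
    (hcop : ∀ (a : A) (b : B), IsOfFinAddOrder b → Nat.Coprime (addOrderOf a) (addOrderOf b))
    (f : Γ →₀ A) : ∃ n : ℕ, n • f = 0 ∧ ∀ b : B, n • b = 0 → b = 0 := by
  refine ⟨∏ y ∈ f.support, addOrderOf (f y), ?_, fun b hb ↦ ?_⟩
  · ext y
    by_cases hy : y ∈ f.support
    · exact addOrderOf_dvd_iff_nsmul_eq_zero.mp (Finset.dvd_prod_of_mem _ hy)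
    · simp [notMem_support_iff.mp hy]
  · have hpos : 0 < ∏ y ∈ f.support, addOrderOf (f y) :=
      Finset.prod_pos fun y _ ↦ (htor _).addOrderOf_pos
    have hfin : IsOfFinAddOrder b := isOfFinAddOrder_iff_nsmul_eq_zero.mpr ⟨_, hpos, hb⟩
    have hcop_b : Nat.Coprime (∏ y ∈ f.support, addOrderOf (f y)) (addOrderOf b) :=
      Nat.Coprime.prod_left fun y _ ↦ hcop _ b hfin
    exact AddMonoid.addOrderOf_eq_one_iff.mp
      (hcop_b.symm.eq_one_of_dvd (addOrderOf_dvd_of_nsmul_eq_zero hb))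

end Coprime

namespace WreathProduct

open SemidirectProduct Finsupp Multiplicative

variable {Γ : Type*} [Group Γ] {C C' C'' : Type*} [AddCommGroup C] [AddCommGroup C']
  [AddCommGroup C'']

theorem mem_base_iff {x : WreathProduct C Γ} : x ∈ base C Γ ↔ x.right = 1 := by
  rw [base, range_inl_eq_ker_rightHom]
  rfl

theorem base_normal : (base C Γ).Normal := by
  rw [base, range_inl_eq_ker_rightHom]
  infer_instance

theorem commute_of_mem_base {x y : WreathProduct C Γ} (hx : x ∈ base C Γ)
    (hy : y ∈ base C Γ) : Commute x y := by
  obtain ⟨x, rfl⟩ := hx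
  obtain ⟨y, rfl⟩ := hy
  exact (Commute.all x y).map inl

theorem ext {x y : WreathProduct C Γ} (hleft : ∀ g, x.left.toAdd g = y.left.toAdd g)
    (hright : x.right = y.right) : x = y :=
  SemidirectProduct.ext (toAdd.injective (Finsupp.ext hleft)) hright

noncomputable def map (f : C →+ C') : WreathProduct C Γ →* WreathProduct C' Γ :=
  SemidirectProduct.map (AddMonoidHom.toMultiplicative (mapRange.addMonoidHom f))
    (MonoidHom.id Γ) fun _ ↦ MonoidHom.ext fun _ ↦ toAdd.injective <| Finsupp.ext fun _ ↦ rfl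

noncomputable def congr (e : C ≃+ C') : WreathProduct C Γ ≃* WreathProduct C' Γ :=
  SemidirectProduct.congr (AddEquiv.toMultiplicative (mapRange.addEquiv e)) (MulEquiv.refl Γ)
    fun _ ↦ MulEquiv.ext fun _ ↦ toAdd.injective <| Finsupp.ext fun _ ↦ rfl

@[simp]
theorem toAdd_map_left_apply (f : C →+ C') (x : WreathProduct C Γ) (y : Γ) :
    (map f x).left.toAdd y = f (x.left.toAdd y) := rfl

@[simp]
theorem map_right (f : C →+ C') (x : WreathProduct C Γ) : (map f x).right = x.right := rfl

theorem map_mem_base (f : C →+ C') {x : WreathProduct C Γ} (hx : x ∈ base C Γ) :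
    map f x ∈ base C' Γ := by
  rw [mem_base_iff, map_right]
  exact mem_base_iff.mp hx

theorem map_map (f : C →+ C') (g : C' →+ C'') (x : WreathProduct C Γ) :
    map g (map f x) = map (g.comp f) x :=
  ext (fun _ ↦ rfl) rfl

@[simp]
theorem map_id_apply (x : WreathProduct C Γ) : map (AddMonoidHom.id C) x = x :=
  ext (fun _ ↦ rfl) rfl

theorem toAdd_wreathAction_apply (g : Γ) (f : Multiplicative (Γ →₀ C)) (y : Γ) :
    (wreathAction C Γ g f).toAdd y = f.toAdd (g⁻¹ * y) := rfl

theorem add_self_eq_zero_of_commute_conj {m : WreathProduct C Γ} (hm : m.right ≠ 1) (c : C)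
    (h : Commute (inl (ofAdd (single 1 c)) * m * (inl (ofAdd (single 1 c)))⁻¹) m) :
    c + c = 0 := by
  -- the coordinate at `m.right` of the commutation relation reads `-c = c`
  have hγ := congrArg (fun z : WreathProduct C Γ ↦ z.left.toAdd m.right) h.eq
  simp only [mul_left, left_inl, right_inl, map_one, MulAut.one_apply, mul_right, one_mul,
    inv_left, inv_one, map_inv, inv_right, mul_one, toAdd_mul, toAdd_ofAdd, toAdd_inv, coe_add,
    coe_neg, Pi.add_apply, Pi.neg_apply, toAdd_wreathAction_apply, inv_mul_cancel,
    single_eq_same, single_eq_of_ne' hm.symm, single_eq_of_ne' (inv_ne_one.mpr hm).symm,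
    map_mul, neg_zero, add_zero, zero_add] at hγ
  rw [add_assoc] at hγ
  exact neg_eq_iff_add_eq_zero.mp (add_right_cancel (add_left_cancel hγ))

theorem apply_mem_base_of_surjective {c : C} (hc : c + c ≠ 0)
    {φ : WreathProduct C Γ →* WreathProduct C Γ} (hφ : Surjective φ) :
    ∀ x ∈ base C Γ, φ x ∈ base C Γ := by
  intro x hx
  by_contra hφx
  obtain ⟨u, hu⟩ := hφ (inl (ofAdd (single 1 c)))
  have hcomm : Commute (u * x * u⁻¹) x := commute_of_mem_base (base_normal.conj_mem x hx u) hx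
  refine hc (add_self_eq_zero_of_commute_conj (mt mem_base_iff.mpr hφx) c ?_)
  simpa [hu] using hcomm.map φ

section Prod

variable {A B : Type*} [AddCommGroup A] [AddCommGroup B]

theorem ker_map_snd :
    (map (AddMonoidHom.snd A B) : WreathProduct (A × B) Γ →* _).ker =
      (base A Γ).map (map (AddMonoidHom.inl A B)) := by
  ext x
  simp only [MonoidHom.mem_ker, Subgroup.mem_map, mem_base_iff]
  constructor
  · intro hx
    refine ⟨map (AddMonoidHom.fst A B) x, congrArg right hx, ext (fun y ↦ ?_) rfl⟩
    have hy := congrArg (fun z : WreathProduct B Γ ↦ z.left.toAdd y) hx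
    exact Prod.ext rfl hy.symm
  · rintro ⟨t, ht, rfl⟩
    exact ext (fun _ ↦ rfl) ht

theorem ker_map_snd_le_comap {φ : WreathProduct (A × B) Γ →* WreathProduct (A × B) Γ}
    (htor : ∀ a : A, IsOfFinAddOrder a)
    (hcop : ∀ (a : A) (b : B), IsOfFinAddOrder b → Nat.Coprime (addOrderOf a) (addOrderOf b))
    (hbase : ∀ x ∈ base (A × B) Γ, φ x ∈ base (A × B) Γ) :
    (map (AddMonoidHom.snd A B)).ker ≤ (map (AddMonoidHom.snd A B)).ker.comap φ := by
  rw [ker_map_snd]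
  rintro _ ⟨_, ⟨f, rfl⟩, rfl⟩
  obtain ⟨n, hnf, hnB⟩ := Finsupp.exists_nsmul_eq_zero_of_coprime (B := B) htor hcop f.toAdd
  have hfn : f ^ n = 1 := by rw [← ofAdd_toAdd f, ← ofAdd_nsmul, hnf, ofAdd_zero]
  obtain ⟨g, hg⟩ := hbase _ (map_mem_base (AddMonoidHom.inl A B) ⟨f, rfl⟩)
  have hgn : g ^ n = 1 :=
    inl_injective (by rw [map_pow, hg, ← map_pow, ← map_pow, ← map_pow, hfn]; simp)
  rw [Subgroup.mem_comap, ← hg, ← ker_map_snd, MonoidHom.mem_ker]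
  refine ext (fun y ↦ hnB _ ?_) rfl
  simpa using congrArg (fun g ↦ (g.toAdd y).2) hgn

theorem surjective_map_fst_comp_comp_map_inl
    {φ : WreathProduct (A × B) Γ →* WreathProduct (A × B) Γ} (hφ : Surjective φ)
    (hbase : ∀ x ∈ base (A × B) Γ, φ x ∈ base (A × B) Γ)
    (hker : (map (AddMonoidHom.snd A B)).ker.comap φ = (map (AddMonoidHom.snd A B)).ker) :
    Surjective ((map (AddMonoidHom.fst A B)).comp (φ.comp (map (AddMonoidHom.inl A B)))) := by
  set iA : WreathProduct A Γ →* WreathProduct (A × B) Γ := map (AddMonoidHom.inl A B)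
  set pA : WreathProduct (A × B) Γ →* WreathProduct A Γ := map (AddMonoidHom.fst A B)
  have hpA_iA : ∀ t, pA (iA t) = t := fun t ↦ by
    rw [map_map, AddMonoidHom.fst_comp_inl, map_id_apply]
  have hbase_le : base A Γ ≤ (pA.comp (φ.comp iA)).range := by
    intro t ht
    have hmem : iA t ∈ ((map (AddMonoidHom.snd A B)).ker.comap φ).map φ := by
      rw [Subgroup.map_comap_eq_self_of_surjective hφ, ker_map_snd]
      exact ⟨t, ht, rfl⟩
    rw [hker, ker_map_snd] at hmem
    obtain ⟨_, ⟨t', -, rfl⟩, ht'⟩ := hmem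
    exact ⟨t', (congrArg pA ht').trans (hpA_iA t)⟩
  intro t
  obtain ⟨w, hw⟩ := hφ (iA t)
  set l := (iA (pA w))⁻¹ * w
  have hl : l ∈ base (A × B) Γ := by simp [l, iA, pA, mem_base_iff, mul_right, inv_right]
  obtain ⟨t', ht'⟩ := hbase_le (map_mem_base (AddMonoidHom.fst A B) (hbase l hl))
  refine ⟨pA w * t', ?_⟩
  calc pA (φ (iA (pA w * t'))) = pA (φ (iA (pA w))) * pA (φ l) := by
        rw [map_mul, map_mul, map_mul]
        exact congrArg (_ * ·) ht'
    _ = pA (φ w) := by rw [← map_mul, ← map_mul, mul_inv_cancel_left]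
    _ = t := by rw [hw, hpA_iA]

end Prod

end WreathProduct

open WreathProduct

theorem wreath_product_base_product_hopfian_general (A B : Type*) [AddCommGroup A]
    [AddCommGroup B] (htor : ∀ a : A, IsOfFinAddOrder a)
    (hcop : ∀ (a : A) (b : B), IsOfFinAddOrder b →
      Nat.Coprime (addOrderOf a) (addOrderOf b))
    (Γ : Type*) [Group Γ]
    (hA : IsHopfian (WreathProduct A Γ)) (hB : IsHopfian (WreathProduct B Γ)) :
    IsHopfian (WreathProduct (A × B) Γ) := by
  rcases subsingleton_or_nontrivial A with hA₀ | hA₀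
  · have : Unique A := uniqueOfSubsingleton 0
    exact hB.of_mulEquiv (WreathProduct.congr AddEquiv.uniqueProd).symm
  rcases subsingleton_or_nontrivial B with hB₀ | hB₀
  · have : Unique B := uniqueOfSubsingleton 0
    exact hA.of_mulEquiv (WreathProduct.congr AddEquiv.prodUnique).symm
  intro φ hφ
  obtain ⟨c, hc⟩ := Prod.exists_add_self_ne_zero hcop
  have hbase := apply_mem_base_of_surjective hc hφ
  have hker : (map (AddMonoidHom.snd A B)).ker.comap φ = (map (AddMonoidHom.snd A B)).ker :=
    hB.comap_ker_eq (s := map (AddMonoidHom.inr A B))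
      (fun w ↦ by rw [map_map, AddMonoidHom.snd_comp_inr, map_id_apply]) hφ
      (ker_map_snd_le_comap htor hcop hbase)
  have hΦ := hA _ (surjective_map_fst_comp_comp_map_inl hφ hbase hker)
  refine (injective_iff_map_eq_one φ).mpr fun x hx ↦ ?_
  have hx_ker : x ∈ (map (AddMonoidHom.snd A B)).ker := by
    rw [← hker, Subgroup.mem_comap, hx]
    exact one_mem _
  rw [ker_map_snd] at hx_ker
  obtain ⟨t, -, rfl⟩ := hx_ker
  have ht : t = 1 := hΦ.eq_iff' (map_one _) |>.mp (by simp [hx])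
  rw [ht, map_one]

/-- Let `A`, `B` be abelian groups such that `A` is torsion and the orders of torsion
elements of `A` and `B` are coprime, and let `Γ` be an infinite finitely generated
group. If `A ≀ Γ` and `B ≀ Γ` are Hopfian, then `(A × B) ≀ Γ` is Hopfian. -/
theorem wreath_product_base_product_hopfian (A B : Type*) [AddCommGroup A]
    [AddCommGroup B] (htor : ∀ a : A, IsOfFinAddOrder a)
    (hcop : ∀ (a : A) (b : B), IsOfFinAddOrder b →
      Nat.Coprime (addOrderOf a) (addOrderOf b))
    (Γ : Type*) [Group Γ] [Group.FG Γ] [Infinite Γ]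
    (hA : IsHopfian (WreathProduct A Γ)) (hB : IsHopfian (WreathProduct B Γ)) :
    IsHopfian (WreathProduct (A × B) Γ) :=
  wreath_product_base_product_hopfian_general A B htor hcop Γ hA hB
end
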